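/- arXiv:1912.00681 — 4 statements merged into one kernel-verified Lean document; each statement's English description precedes it below -/
import Mathlib

section
/- If X is a nonnegative random variable that is New-Better-than-Used (NBU), i.e., its survival function satisfies F̄(t₁+t₂) ≤ F̄(t₁)·F̄(t₂) for all t₁,t₂ ≥ 0, and X₁,...,X_d are i.i.d. copies of X, then E[min{X₁,...,X_d}] ≥ (1/d)·E[X]. -/
/-!
Write `F t = P(X > t)`. Iterating the NBU inequality gives `F (d t) ≤ F t ^ d`, and
`F t ^ d = P(min_i X_i > t)` by independence. The left side is the survival function of `X / d`,
so `X / d` is stochastically dominated by `min_i X_i`, and the layer-cake formula turns this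
into `E[X] / d ≤ E[min_i X_i]`.
-/

open MeasureTheory ProbabilityTheory

theorem map_natCast_mul_le_pow {M : Type*} [CommMonoid M] [Preorder M] [MulRightMono M]
    {F : ℝ → M} (hF : ∀ s t, 0 ≤ s → 0 ≤ t → F (s + t) ≤ F s * F t) {t : ℝ} (ht : 0 ≤ t)
    {n : ℕ} (hn : 1 ≤ n) : F (n * t) ≤ F t ^ n := by
  induction n, hn using Nat.le_induction with
  | base => simp
  | succ m _ ih =>
    calc F ((m + 1 : ℕ) * t) = F (m * t + t) := by push_cast; ring_nf
      _ ≤ F (m * t) * F t := hF _ _ (by positivity) ht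
      _ ≤ F t ^ m * F t := mul_le_mul_left ih _
      _ = F t ^ (m + 1) := (pow_succ _ _).symm

section

variable {Ω : Type*} [MeasurableSpace Ω] {μ : Measure Ω}

theorem integral_le_integral_of_measure_lt_le {f g : Ω → ℝ} (hf : 0 ≤ᵐ[μ] f) (hg : 0 ≤ᵐ[μ] g)
    (hfm : AEMeasurable f μ) (hgi : Integrable g μ)
    (hfg : ∀ t > 0, μ {ω | t < f ω} ≤ μ {ω | t < g ω}) : ∫ ω, f ω ∂μ ≤ ∫ ω, g ω ∂μ := by
  have hlintegral : ∫⁻ ω, ENNReal.ofReal (f ω) ∂μ ≤ ∫⁻ ω, ENNReal.ofReal (g ω) ∂μ := by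
    rw [lintegral_eq_lintegral_meas_lt μ hf hfm,
      lintegral_eq_lintegral_meas_lt μ hg hgi.aemeasurable]
    exact setLIntegral_mono' measurableSet_Ioi hfg
  rw [integral_eq_lintegral_of_nonneg_ae hf hfm.aestronglyMeasurable,
    integral_eq_lintegral_of_nonneg_ae hg hgi.aestronglyMeasurable]
  exact ENNReal.toReal_mono hgi.lintegral_lt_top.ne hlintegral

theorem iIndepFun.measure_lt_iInf {ι : Type*} [Fintype ι] [Nonempty ι] {X : ι → Ω → ℝ}
    (hX : iIndepFun X μ) (t : ℝ) :
    μ {ω | t < ⨅ i, X i ω} = ∏ i, μ {ω | t < X i ω} := by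
  have hset : {ω | t < ⨅ i, X i ω} = ⋂ i, X i ⁻¹' Set.Ioi t := by
    ext ω
    simp [← Finset.inf'_univ_eq_ciInf, Finset.lt_inf'_iff]
  rw [hset, hX.meas_iInter fun i => ⟨Set.Ioi t, measurableSet_Ioi, rfl⟩]
  rfl

end

theorem nbu_min_expectation_ge_general {Ω : Type*} [MeasureSpace Ω]
    [IsProbabilityMeasure (ℙ : Measure Ω)]
    (d : ℕ) (hd : 0 < d) (X : Fin d → Ω → ℝ)
    (hnonneg : ∀ i ω, 0 ≤ X i ω)
    (hint : Integrable (X ⟨0, hd⟩))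
    (hiid : iIndepFun X ℙ)
    (hid : ∀ i, IdentDistrib (X i) (X ⟨0, hd⟩) ℙ ℙ)
    (hNBU : ∀ t₁ t₂ : ℝ, 0 ≤ t₁ → 0 ≤ t₂ →
      (ℙ {ω | X ⟨0, hd⟩ ω > t₁ + t₂}).toReal ≤
        (ℙ {ω | X ⟨0, hd⟩ ω > t₁}).toReal * (ℙ {ω | X ⟨0, hd⟩ ω > t₂}).toReal) :
    (1 / (d : ℝ)) * ∫ ω, X ⟨0, hd⟩ ω ≤ ∫ ω, ⨅ i, X i ω := by
  have : NeZero d := ⟨hd.ne'⟩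
  set X₀ := X ⟨0, hd⟩
  set F : ℝ → ENNReal := fun t => ℙ {ω | t < X₀ ω}
  have hF_nbu : ∀ s t, 0 ≤ s → 0 ≤ t → F (s + t) ≤ F s * F t := fun s t hs ht => by
    have := hNBU s t hs ht
    rwa [← ENNReal.toReal_mul, ENNReal.toReal_le_toReal (measure_ne_top _ _)
      (ENNReal.mul_ne_top (measure_ne_top _ _) (measure_ne_top _ _))] at this
  have hmin_survival : ∀ t, ℙ {ω | t < ⨅ i, X i ω} = F t ^ d := fun t => by
    rw [iIndepFun.measure_lt_iInf hiid,
      Fintype.prod_congr (fun i => ℙ {ω | t < X i ω}) (fun _ => F t) fun i =>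
        (hid i).measure_mem_eq measurableSet_Ioi,
      Finset.prod_const, Finset.card_univ, Fintype.card_fin]
  have hmin_nonneg : ∀ ω, 0 ≤ ⨅ i, X i ω := fun ω => le_ciInf fun i => hnonneg i ω
  have hmin_int : Integrable (fun ω => ⨅ i, X i ω) :=
    hint.mono' (AEMeasurable.iInf fun i => (hid i).aemeasurable_fst).aestronglyMeasurable
      (ae_of_all _ fun ω => by
        rw [Real.norm_of_nonneg (hmin_nonneg ω)]
        exact ciInf_le (Set.finite_range _).bddBelow _)
  rw [one_div_mul_eq_div, ← integral_div]
  refine integral_le_integral_of_measure_lt_le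
    (ae_of_all _ fun ω => div_nonneg (hnonneg _ ω) d.cast_nonneg) (ae_of_all _ hmin_nonneg)
    (hint.aemeasurable.div_const _) hmin_int fun t ht => ?_
  have hd' : (0 : ℝ) < d := Nat.cast_pos.mpr hd
  calc ℙ {ω | t < X₀ ω / d} = F (d * t) := by simp only [lt_div_iff₀ hd', mul_comm t]; rfl
    _ ≤ F t ^ d := map_natCast_mul_le_pow hF_nbu ht.le hd
    _ = ℙ {ω | t < ⨅ i, X i ω} := (hmin_survival t).symm

/-- If `X 0, …, X (d-1)` are i.i.d. nonnegative random variables whose common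
survival function is NBU, then `E[min_i X i] ≥ (1/d) E[X]`. -/
theorem nbu_min_expectation_ge {Ω : Type*} [MeasureSpace Ω]
    [IsProbabilityMeasure (ℙ : Measure Ω)]
    (d : ℕ) (hd : 0 < d) (X : Fin d → Ω → ℝ)
    (hmeas : ∀ i, Measurable (X i))
    (hnonneg : ∀ i ω, 0 ≤ X i ω)
    (hint : Integrable (X ⟨0, hd⟩))
    (hiid : iIndepFun X ℙ)
    (hid : ∀ i, IdentDistrib (X i) (X ⟨0, hd⟩) ℙ ℙ)
    (hNBU : ∀ t₁ t₂ : ℝ, 0 ≤ t₁ → 0 ≤ t₂ →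
      (ℙ {ω | X ⟨0, hd⟩ ω > t₁ + t₂}).toReal ≤
        (ℙ {ω | X ⟨0, hd⟩ ω > t₁}).toReal * (ℙ {ω | X ⟨0, hd⟩ ω > t₂}).toReal) :
    (1 / (d : ℝ)) * ∫ ω, X ⟨0, hd⟩ ω ≤ ∫ ω, ⨅ i, X i ω :=
  nbu_min_expectation_ge_general d hd X hnonneg hint hiid hid hNBU
end

section
/- If X is a nonnegative random variable that is New-Worse-than-Used (NWU), i.e., its survival function satisfies F̄(t₁+t₂) ≥ F̄(t₁)·F̄(t₂) for all t₁,t₂ ≥ 0, and X₁,...,X_d are i.i.d. copies of X, then E[min{X₁,...,X_d}] ≤ (1/d)·E[X]. -/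
/-!
NWU makes the survival function `F̄` supermultiplicative, so `F̄ t ^ d ≤ F̄ (d t)`; by independence
the left side is the survival function of the minimum. Integrating survival functions over
`(0, ∞)` (layer cake) and substituting `s = d t` gives `E[min] ≤ E[X] / d`.
-/

open MeasureTheory ProbabilityTheory Set
open scoped ENNReal

theorem pow_le_apply_mul_of_superMultiplicative {F : ℝ → ℝ≥0∞}
    (hF : ∀ s t, 0 ≤ s → 0 ≤ t → F s * F t ≤ F (s + t)) {t : ℝ} (ht : 0 ≤ t)
    {n : ℕ} (hn : 0 < n) : F t ^ n ≤ F (n * t) := by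
  induction n, hn using Nat.le_induction with
  | base => simp
  | succ n hn ih =>
    calc F t ^ (n + 1) = F t ^ n * F t := pow_succ _ _
      _ ≤ F (n * t) * F t := by gcongr
      _ ≤ F (n * t + t) := hF _ _ (by positivity) ht
      _ = F ((n + 1 : ℕ) * t) := by push_cast; ring_nf

theorem lintegral_comp_mul_left_Ioi (g : ℝ → ℝ≥0∞) (a : ℝ) {b : ℝ} (hb : 0 < b) :
    ∫⁻ x in Ioi a, g (b * x) = ENNReal.ofReal b⁻¹ * ∫⁻ x in Ioi (b * a), g x := by
  have he : MeasurableEmbedding (b * ·) :=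
    (Homeomorph.mulLeft₀ b hb.ne').isClosedEmbedding.measurableEmbedding
  have hpre : (b * ·) ⁻¹' Ioi (b * a) = Ioi a := by
    ext x; simp [mul_lt_mul_iff_right₀ hb]
  rw [← he.lintegral_map, ← hpre, ← he.restrict_map, Real.map_volume_mul_left hb.ne',
    Measure.restrict_smul, lintegral_smul_measure, abs_of_pos (inv_pos.mpr hb), smul_eq_mul]

theorem lintegral_ofReal_le_of_meas_lt_le {α β : Type*} [MeasurableSpace α] [MeasurableSpace β]
    {μ : Measure α} {ν : Measure β} {f : α → ℝ} {g : β → ℝ}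
    (hf_nn : 0 ≤ᵐ[μ] f) (hf : AEMeasurable f μ) (hg_nn : 0 ≤ᵐ[ν] g) (hg : AEMeasurable g ν)
    {c : ℝ} (hc : 0 < c) (hfg : ∀ t, 0 < t → μ {x | t < f x} ≤ ν {y | c * t < g y}) :
    ∫⁻ x, ENNReal.ofReal (f x) ∂μ ≤ ENNReal.ofReal c⁻¹ * ∫⁻ y, ENNReal.ofReal (g y) ∂ν := by
  have hscale := lintegral_comp_mul_left_Ioi (fun t => ν {y | t < g y}) 0 hc
  rw [mul_zero] at hscale
  rw [lintegral_eq_lintegral_meas_lt μ hf_nn hf, lintegral_eq_lintegral_meas_lt ν hg_nn hg,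
    ← hscale]
  exact setLIntegral_mono' measurableSet_Ioi hfg

theorem setOf_lt_ciInf_eq_iInter_preimage_Ioi {Ω ι : Type*} [Finite ι] [Nonempty ι]
    (X : ι → Ω → ℝ) (t : ℝ) : {ω | t < ⨅ i, X i ω} = ⋂ i, X i ⁻¹' Ioi t := by
  ext ω
  obtain ⟨j, hj⟩ := exists_eq_ciInf_of_finite (f := fun i => X i ω)
  simp only [mem_iInter, mem_preimage, mem_Ioi]
  change t < ⨅ i, X i ω ↔ _
  rw [← hj]
  exact ⟨fun h i => h.trans_le (hj ▸ ciInf_le (Finite.bddBelow_range _) i), fun h => h j⟩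

theorem ProbabilityTheory.iIndepFun.measure_lt_iInf_eq_pow {Ω ι : Type*} [MeasurableSpace Ω]
    {μ : Measure Ω} [Fintype ι] [Nonempty ι] {X : ι → Ω → ℝ} {Y : Ω → ℝ} (hX : iIndepFun X μ)
    (hXY : ∀ i, IdentDistrib (X i) Y μ μ) (t : ℝ) :
    μ {ω | t < ⨅ i, X i ω} = μ {ω | t < Y ω} ^ Fintype.card ι := by
  rw [setOf_lt_ciInf_eq_iInter_preimage_Ioi,
    hX.meas_iInter fun i => ⟨Ioi t, measurableSet_Ioi, rfl⟩,
    ← Finset.card_univ, ← Finset.prod_const]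
  exact Finset.prod_congr rfl fun i _ => (hXY i).measure_mem_eq measurableSet_Ioi

/-- If `X 0, …, X (d-1)` are i.i.d. nonnegative random variables whose common
survival function is NWU, then `E[min_i X i] ≤ (1/d) E[X]`. -/
theorem nwu_min_expectation_le {Ω : Type*} [MeasureSpace Ω]
    [IsProbabilityMeasure (ℙ : Measure Ω)]
    (d : ℕ) (hd : 0 < d) (X : Fin d → Ω → ℝ)
    (hmeas : ∀ i, Measurable (X i))
    (hnonneg : ∀ i ω, 0 ≤ X i ω)
    (hint : Integrable (X ⟨0, hd⟩))
    (hiid : iIndepFun X ℙ)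
    (hid : ∀ i, IdentDistrib (X i) (X ⟨0, hd⟩) ℙ ℙ)
    (hNWU : ∀ t₁ t₂ : ℝ, 0 ≤ t₁ → 0 ≤ t₂ →
      (ℙ {ω | X ⟨0, hd⟩ ω > t₁}).toReal * (ℙ {ω | X ⟨0, hd⟩ ω > t₂}).toReal ≤
        (ℙ {ω | X ⟨0, hd⟩ ω > t₁ + t₂}).toReal) :
    ∫ ω, ⨅ i, X i ω ≤ (1 / (d : ℝ)) * ∫ ω, X ⟨0, hd⟩ ω := by
  have : Nonempty (Fin d) := ⟨⟨0, hd⟩⟩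
  have hsuper (s t : ℝ) (hs : 0 ≤ s) (ht : 0 ≤ t) :
      ℙ {ω | s < X ⟨0, hd⟩ ω} * ℙ {ω | t < X ⟨0, hd⟩ ω} ≤ ℙ {ω | s + t < X ⟨0, hd⟩ ω} := by
    have h := hNWU s t hs ht
    rwa [← ENNReal.toReal_mul, ENNReal.toReal_le_toReal (by finiteness) (by finiteness)] at h
  have hsurv_min (t : ℝ) (ht : 0 < t) :
      ℙ {ω | t < ⨅ i, X i ω} ≤ ℙ {ω | d * t < X ⟨0, hd⟩ ω} := by
    rw [hiid.measure_lt_iInf_eq_pow hid, Fintype.card_fin]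
    exact pow_le_apply_mul_of_superMultiplicative hsuper ht.le hd
  have hmin_nn : 0 ≤ᵐ[ℙ] fun ω => ⨅ i, X i ω :=
    ae_of_all _ fun ω => le_ciInf fun i => hnonneg i ω
  have hX_nn : 0 ≤ᵐ[ℙ] X ⟨0, hd⟩ := ae_of_all _ (hnonneg _)
  have hkey := lintegral_ofReal_le_of_meas_lt_le hmin_nn (Measurable.iInf hmeas).aemeasurable
    hX_nn (hmeas _).aemeasurable (Nat.cast_pos.mpr hd) hsurv_min
  rw [← ofReal_integral_eq_lintegral_ofReal hint hX_nn, ← ENNReal.ofReal_mul (by positivity)]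
    at hkey
  rw [integral_eq_lintegral_of_nonneg_ae hmin_nn (Measurable.iInf hmeas).aestronglyMeasurable,
    one_div]
  exact ENNReal.toReal_le_of_le_ofReal
    (mul_nonneg (by positivity) (integral_nonneg (hnonneg _))) hkey
end

section
/- For a nonnegative NBU random variable X with i.i.d. copies, the quantity d·E[min{X₁,...,X_d}] = d·∫₀^∞ F̄(t)^d dt is nondecreasing in the integer d ≥ 1. -/
/-!
Write `M d = ∫₀^∞ F̄^d`. Since `M d - M (d+1) = ∫ F̄^d (1 - F̄)`, it suffices to show
`(d+1) ∫ F̄^d (1 - F̄) ≤ M d`. By Tonelli, `∫ F̄^d (1 - F̄) = ∫₀¹ ∫ F̄(t)^d 1{F̄(t) < u} dt du`, and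
NBU bounds the inner integral by `u^d M d`: if `F̄ x < u` then `F̄ t ≤ u F̄ (t - x)` for `t > x`,
and `x` can be taken arbitrarily close to the start of the sublevel set `{F̄ < u}`.
Integrating `u^d` over `(0,1)` produces the factor `1/(d+1)`.

The pointwise route through `F̄(u/d)^d` does not work: for `F̄ t = exp (-⌊t⌋)`, which is NBU,
`F̄(u/d)^d` is not monotone in `d`.
-/

open MeasureTheory Set
open scoped ENNReal

theorem setLIntegral_Ioi_comp_sub (f : ℝ → ℝ≥0∞) (x : ℝ) :
    ∫⁻ t in Ioi x, f (t - x) = ∫⁻ t in Ioi 0, f t := by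
  rw [← lintegral_indicator measurableSet_Ioi, ← lintegral_indicator measurableSet_Ioi,
    ← lintegral_sub_right_eq_self ((Ioi 0).indicator f) x]
  congr 1 with t
  simp [indicator, sub_pos]

theorem lintegral_Ioo_pow (d : ℕ) :
    ∫⁻ u in Ioo (0 : ℝ) 1, ENNReal.ofReal (u ^ d) = ((d : ℝ≥0∞) + 1)⁻¹ := by
  rw [← ofReal_integral_eq_lintegral_ofReal]
  · rw [← integral_Ioc_eq_integral_Ioo, ← intervalIntegral.integral_of_le zero_le_one,
      integral_pow]
    simp [ENNReal.ofReal_inv_of_pos (by positivity : (0 : ℝ) < d + 1)]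
    norm_cast
  · exact ((continuous_pow d).integrableOn_Icc).mono_set Ioo_subset_Icc_self
  · filter_upwards [ae_restrict_mem measurableSet_Ioo] with u hu
    exact pow_nonneg hu.1.le d

theorem lintegral_Ioo_ite_lt {a : ℝ} (ha : 0 ≤ a) (c : ℝ≥0∞) :
    ∫⁻ u in Ioo (0 : ℝ) 1, (if a < u then c else 0) = c * ENNReal.ofReal (1 - a) := by
  have hset : Ioi a ∩ Ioo 0 1 = Ioo a 1 := by
    ext u
    simp only [mem_inter_iff, mem_Ioi, mem_Ioo]
    constructor
    · rintro ⟨hau, -, hu1⟩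
      exact ⟨hau, hu1⟩
    · rintro ⟨hau, hu1⟩
      exact ⟨hau, ha.trans_lt hau, hu1⟩
  change ∫⁻ u in Ioo (0 : ℝ) 1, (Ioi a).indicator (fun _ => c) u = _
  rw [lintegral_indicator measurableSet_Ioi, setLIntegral_const,
    Measure.restrict_apply measurableSet_Ioi, hset, Real.volume_Ioo]

def IsNBU (G : ℝ → ℝ) : Prop :=
  ∀ a b : ℝ, 0 ≤ a → 0 ≤ b → G (a + b) ≤ G a * G b

namespace IsNBU

noncomputable def powLIntegral (G : ℝ → ℝ) (d : ℕ) : ℝ≥0∞ :=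
  ∫⁻ t in Ioi (0 : ℝ), ENNReal.ofReal (G t ^ d)

variable {G : ℝ → ℝ}

theorem antitoneOn (hG : IsNBU G) (h0 : ∀ t, 0 ≤ G t) (h1 : ∀ t, G t ≤ 1) :
    AntitoneOn G (Ici 0) := by
  intro s hs t ht hst
  calc G t = G (s + (t - s)) := by rw [add_sub_cancel]
    _ ≤ G s * G (t - s) := hG s (t - s) hs (sub_nonneg.mpr hst)
    _ ≤ G s := mul_le_of_le_one_right (h0 s) (h1 _)

theorem powLIntegral_antitone (h0 : ∀ t, 0 ≤ G t) (h1 : ∀ t, G t ≤ 1) :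
    Antitone (powLIntegral G) := fun _ _ hde =>
  lintegral_mono fun t => ENNReal.ofReal_le_ofReal (pow_le_pow_of_le_one (h0 t) (h1 t) hde)

theorem setLIntegral_Ioi_pow_le (hG : IsNBU G) (h0 : ∀ t, 0 ≤ G t) {x u : ℝ} (hx : 0 ≤ x)
    (hxu : G x ≤ u) (d : ℕ) :
    ∫⁻ t in Ioi x, ENNReal.ofReal (G t ^ d) ≤ ENNReal.ofReal (u ^ d) * powLIntegral G d := by
  have hpt : ∀ t ∈ Ioi x,
      ENNReal.ofReal (G t ^ d) ≤ ENNReal.ofReal (u ^ d) * ENNReal.ofReal (G (t - x) ^ d) := by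
    intro t ht
    have hGt : G t ≤ u * G (t - x) :=
      calc G t = G (x + (t - x)) := by rw [add_sub_cancel]
        _ ≤ G x * G (t - x) := hG x (t - x) hx (sub_nonneg.mpr (le_of_lt ht))
        _ ≤ u * G (t - x) := mul_le_mul_of_nonneg_right hxu (h0 _)
    rw [← ENNReal.ofReal_mul' (pow_nonneg (h0 _) d), ← mul_pow]
    exact ENNReal.ofReal_le_ofReal (pow_le_pow_left₀ (h0 t) hGt d)
  calc ∫⁻ t in Ioi x, ENNReal.ofReal (G t ^ d)
      ≤ ∫⁻ t in Ioi x, ENNReal.ofReal (u ^ d) * ENNReal.ofReal (G (t - x) ^ d) :=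
        setLIntegral_mono' measurableSet_Ioi hpt
    _ = ENNReal.ofReal (u ^ d) * powLIntegral G d := by
        rw [lintegral_const_mul' _ _ ENNReal.ofReal_ne_top,
          setLIntegral_Ioi_comp_sub (fun t => ENNReal.ofReal (G t ^ d)), powLIntegral]

theorem lintegral_sublevel_le_add (hG : IsNBU G) (h0 : ∀ t, 0 ≤ G t) (h1 : ∀ t, G t ≤ 1)
    {u x : ℝ} (hx : 0 < x) (hxu : G x < u) (d : ℕ) :
    ∫⁻ t in Ioi 0, (if G t < u then ENNReal.ofReal (G t ^ d) else 0) ≤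
      ENNReal.ofReal (x - sInf {t | 0 < t ∧ G t < u}) +
        ENNReal.ofReal (u ^ d) * powLIntegral G d := by
  set s := sInf {t | 0 < t ∧ G t < u}
  have hbdd : BddBelow {t | 0 < t ∧ G t < u} := ⟨0, fun t ht => ht.1.le⟩
  have hpt : ∀ t ∈ Ioi (0 : ℝ), (if G t < u then ENNReal.ofReal (G t ^ d) else 0) ≤
      (Icc s x).indicator 1 t + (Ioi x).indicator (fun t => ENNReal.ofReal (G t ^ d)) t := by
    intro t ht
    split_ifs with htu
    · rcases le_or_gt t x with htx | hxt
      · have hst : s ≤ t := csInf_le hbdd ⟨ht, htu⟩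
        rw [indicator_of_mem (mem_Icc.mpr ⟨hst, htx⟩), Pi.one_apply,
          ← ENNReal.ofReal_one]
        exact le_add_right (ENNReal.ofReal_le_ofReal (pow_le_one₀ (h0 t) (h1 t)))
      · rw [indicator_of_mem (mem_Ioi.mpr hxt)]
        exact le_add_self
    · exact zero_le
  calc ∫⁻ t in Ioi 0, (if G t < u then ENNReal.ofReal (G t ^ d) else 0)
      ≤ ∫⁻ t in Ioi 0, ((Icc s x).indicator 1 t +
          (Ioi x).indicator (fun t => ENNReal.ofReal (G t ^ d)) t) :=
        setLIntegral_mono' measurableSet_Ioi hpt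
    _ ≤ ∫⁻ t, ((Icc s x).indicator 1 t +
          (Ioi x).indicator (fun t => ENNReal.ofReal (G t ^ d)) t) :=
        setLIntegral_le_lintegral _ _
    _ = volume (Icc s x) + ∫⁻ t in Ioi x, ENNReal.ofReal (G t ^ d) := by
        rw [lintegral_add_left (measurable_one.indicator measurableSet_Icc),
          lintegral_indicator_one measurableSet_Icc, lintegral_indicator measurableSet_Ioi]
    _ ≤ ENNReal.ofReal (x - s) + ENNReal.ofReal (u ^ d) * powLIntegral G d := by
        rw [Real.volume_Icc]
        gcongr
        exact setLIntegral_Ioi_pow_le hG h0 hx.le hxu.le d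

theorem lintegral_sublevel_le (hG : IsNBU G) (h0 : ∀ t, 0 ≤ G t) (h1 : ∀ t, G t ≤ 1)
    (u : ℝ) (d : ℕ) :
    ∫⁻ t in Ioi 0, (if G t < u then ENNReal.ofReal (G t ^ d) else 0) ≤
      ENNReal.ofReal (u ^ d) * powLIntegral G d := by
  by_cases hS : {t | 0 < t ∧ G t < u}.Nonempty
  · refine ENNReal.le_of_forall_pos_le_add fun ε hε _ => ?_
    obtain ⟨x, ⟨hx, hxu⟩, hxε⟩ :=
      exists_lt_of_csInf_lt hS (lt_add_of_pos_right _ (NNReal.coe_pos.mpr hε))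
    calc _ ≤ ENNReal.ofReal (x - sInf {t | 0 < t ∧ G t < u}) +
          ENNReal.ofReal (u ^ d) * powLIntegral G d :=
          lintegral_sublevel_le_add hG h0 h1 hx hxu d
      _ ≤ ε + ENNReal.ofReal (u ^ d) * powLIntegral G d := by
          gcongr
          rw [← ENNReal.ofReal_coe_nnreal]
          exact ENNReal.ofReal_le_ofReal (by linarith)
      _ = _ := add_comm _ _
  · have hzero : ∀ t ∈ Ioi (0 : ℝ), (if G t < u then ENNReal.ofReal (G t ^ d) else 0) = 0 :=
      fun t ht => if_neg fun htu => hS ⟨t, ht, htu⟩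
    rw [setLIntegral_congr_fun measurableSet_Ioi hzero, lintegral_zero]
    exact zero_le

theorem lintegral_pow_mul_one_sub_eq (hm : Measurable G) (h0 : ∀ t, 0 ≤ G t) (d : ℕ) :
    ∫⁻ t in Ioi 0, ENNReal.ofReal (G t ^ d * (1 - G t)) =
      ∫⁻ u in Ioo 0 1, ∫⁻ t in Ioi 0, (if G t < u then ENNReal.ofReal (G t ^ d) else 0) := by
  have hmeas : Measurable (Function.uncurry fun t u : ℝ =>
      if G t < u then ENNReal.ofReal (G t ^ d) else 0) :=
    Measurable.ite (measurableSet_lt (hm.comp measurable_fst) measurable_snd)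
      ((hm.comp measurable_fst).pow_const d).ennreal_ofReal measurable_const
  rw [← lintegral_lintegral_swap hmeas.aemeasurable]
  refine lintegral_congr fun t => ?_
  rw [lintegral_Ioo_ite_lt (h0 t), ENNReal.ofReal_mul (pow_nonneg (h0 t) d)]

theorem succ_mul_lintegral_pow_mul_one_sub_le (hG : IsNBU G) (hm : Measurable G)
    (h0 : ∀ t, 0 ≤ G t) (h1 : ∀ t, G t ≤ 1) (d : ℕ) :
    ((d : ℝ≥0∞) + 1) * ∫⁻ t in Ioi 0, ENNReal.ofReal (G t ^ d * (1 - G t)) ≤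
      powLIntegral G d :=
  calc ((d : ℝ≥0∞) + 1) * ∫⁻ t in Ioi 0, ENNReal.ofReal (G t ^ d * (1 - G t))
      ≤ ((d : ℝ≥0∞) + 1) *
          ∫⁻ u in Ioo (0 : ℝ) 1, ENNReal.ofReal (u ^ d) * powLIntegral G d := by
        rw [lintegral_pow_mul_one_sub_eq hm h0]
        gcongr with u
        exact lintegral_sublevel_le hG h0 h1 u d
    _ = powLIntegral G d := by
        rw [lintegral_mul_const _ (by fun_prop : Measurable fun u : ℝ => ENNReal.ofReal (u ^ d)),
          lintegral_Ioo_pow, ← mul_assoc, ENNReal.mul_inv_cancel (by positivity) (by simp), one_mul]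

theorem powLIntegral_eq_add (hm : Measurable G) (h0 : ∀ t, 0 ≤ G t) (h1 : ∀ t, G t ≤ 1)
    (d : ℕ) :
    powLIntegral G d =
      powLIntegral G (d + 1) + ∫⁻ t in Ioi 0, ENNReal.ofReal (G t ^ d * (1 - G t)) := by
  rw [powLIntegral, powLIntegral, ← lintegral_add_left (hm.pow_const _).ennreal_ofReal]
  refine lintegral_congr fun t => ?_
  rw [← ENNReal.ofReal_add (pow_nonneg (h0 t) _)
    (mul_nonneg (pow_nonneg (h0 t) _) (sub_nonneg.mpr (h1 t)))]
  ring_nf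

theorem natCast_mul_powLIntegral_le_succ (hG : IsNBU G) (hm : Measurable G)
    (h0 : ∀ t, 0 ≤ G t) (h1 : ∀ t, G t ≤ 1) (hfin : powLIntegral G 1 ≠ ⊤) (d : ℕ) :
    (d : ℝ≥0∞) * powLIntegral G d ≤ ((d + 1 : ℕ) : ℝ≥0∞) * powLIntegral G (d + 1) := by
  rcases Nat.eq_zero_or_pos d with rfl | hd
  · simp
  set D := ∫⁻ t in Ioi 0, ENNReal.ofReal (G t ^ d * (1 - G t))
  have hD : ((d : ℝ≥0∞) + 1) * D ≤ powLIntegral G d :=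
    succ_mul_lintegral_pow_mul_one_sub_le hG hm h0 h1 d
  have hDfin : ((d : ℝ≥0∞) + 1) * D ≠ ⊤ :=
    ne_top_of_le_ne_top (ne_top_of_le_ne_top hfin (powLIntegral_antitone h0 h1 hd)) hD
  refine (ENNReal.add_le_add_iff_right hDfin).mp ?_
  calc (d : ℝ≥0∞) * powLIntegral G d + ((d : ℝ≥0∞) + 1) * D
      ≤ (d : ℝ≥0∞) * powLIntegral G d + powLIntegral G d := by gcongr
    _ = ((d : ℝ≥0∞) + 1) * (powLIntegral G (d + 1) + D) := by
        rw [← powLIntegral_eq_add hm h0 h1]; ring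
    _ = ((d + 1 : ℕ) : ℝ≥0∞) * powLIntegral G (d + 1) + ((d : ℝ≥0∞) + 1) * D := by
        push_cast; ring

theorem monotone_natCast_mul_powLIntegral (hG : IsNBU G) (hm : Measurable G)
    (h0 : ∀ t, 0 ≤ G t) (h1 : ∀ t, G t ≤ 1) (hfin : powLIntegral G 1 ≠ ⊤) :
    Monotone fun d : ℕ => (d : ℝ≥0∞) * powLIntegral G d :=
  monotone_nat_of_le_succ (natCast_mul_powLIntegral_le_succ hG hm h0 h1 hfin)

theorem natCast_mul_powLIntegral_ne_top (h0 : ∀ t, 0 ≤ G t) (h1 : ∀ t, G t ≤ 1)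
    (hfin : powLIntegral G 1 ≠ ⊤) (d : ℕ) : (d : ℝ≥0∞) * powLIntegral G d ≠ ⊤ := by
  rcases Nat.eq_zero_or_pos d with rfl | hd
  · simp
  · exact ENNReal.mul_ne_top (ENNReal.natCast_ne_top d)
      (ne_top_of_le_ne_top hfin (powLIntegral_antitone h0 h1 hd))

theorem powLIntegral_one_ne_top (hint : IntegrableOn G (Ioi 0)) : powLIntegral G 1 ≠ ⊤ := by
  simpa [powLIntegral] using hint.lintegral_lt_top.ne

theorem integral_pow_eq_toReal_powLIntegral (hm : Measurable G) (h0 : ∀ t, 0 ≤ G t) (d : ℕ) :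
    ∫ t in Ioi 0, G t ^ d = (powLIntegral G d).toReal :=
  integral_eq_lintegral_of_nonneg_ae (ae_of_all _ fun t => pow_nonneg (h0 t) d)
    (hm.pow_const d).aestronglyMeasurable

theorem natCast_mul_integral_pow_le (hG : IsNBU G) (hm : Measurable G) (h0 : ∀ t, 0 ≤ G t)
    (h1 : ∀ t, G t ≤ 1) (hint : IntegrableOn G (Ioi 0)) {d₁ d₂ : ℕ} (hd : d₁ ≤ d₂) :
    (d₁ : ℝ) * ∫ t in Ioi 0, G t ^ d₁ ≤ d₂ * ∫ t in Ioi 0, G t ^ d₂ := by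
  have hfin := powLIntegral_one_ne_top hint
  simpa only [integral_pow_eq_toReal_powLIntegral hm h0, ENNReal.toReal_mul,
    ENNReal.toReal_natCast] using
    ENNReal.toReal_mono (natCast_mul_powLIntegral_ne_top h0 h1 hfin d₂)
      (monotone_natCast_mul_powLIntegral hG hm h0 h1 hfin hd)

end IsNBU

theorem nbu_d_times_expected_min_monotone_general (Fbar : ℝ → ℝ)
    (hrange : ∀ t, 0 ≤ Fbar t ∧ Fbar t ≤ 1)
    (hNBU : ∀ t₁ t₂ : ℝ, 0 ≤ t₁ → 0 ≤ t₂ → Fbar (t₁ + t₂) ≤ Fbar t₁ * Fbar t₂)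
    (hint : IntegrableOn Fbar (Ioi 0))
    (d₁ d₂ : ℕ) (hd : d₁ ≤ d₂) :
    (d₁ : ℝ) * ∫ t in Ioi (0 : ℝ), Fbar t ^ d₁ ≤
      (d₂ : ℝ) * ∫ t in Ioi (0 : ℝ), Fbar t ^ d₂ := by
  obtain ⟨hF0, hF1⟩ := forall_and.mp hrange
  set G : ℝ → ℝ := fun t => Fbar (max t 0)
  have hGF : EqOn G Fbar (Ioi 0) := fun t ht => by simp [G, (mem_Ioi.mp ht).le]
  have h0 : ∀ t, 0 ≤ G t := fun t => hF0 _
  have h1 : ∀ t, G t ≤ 1 := fun t => hF1 _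
  have hG : IsNBU G := fun a b ha hb => by
    simpa [G, ha, hb, add_nonneg ha hb] using hNBU a b ha hb
  have hm : Measurable G := Antitone.measurable fun s t hst =>
    IsNBU.antitoneOn hNBU hF0 hF1
      (le_max_right s 0) (le_max_right t 0) (max_le_max_right 0 hst)
  have hcongr : ∀ d : ℕ, ∫ t in Ioi (0 : ℝ), Fbar t ^ d = ∫ t in Ioi 0, G t ^ d := fun d =>
    setIntegral_congr_fun measurableSet_Ioi fun t ht => by rw [hGF ht]
  rw [hcongr, hcongr]
  exact IsNBU.natCast_mul_integral_pow_le hG hm h0 h1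
    (hint.congr_fun hGF.symm measurableSet_Ioi) hd

/-- For a survival function `F̄` of a nonnegative NBU random variable with finite mean,
`d · ∫₀^∞ F̄(t)^d dt` (which equals `d · E[min of d i.i.d. copies]`) is nondecreasing
in the integer `d ≥ 1`. -/
theorem nbu_d_times_expected_min_monotone (Fbar : ℝ → ℝ)
    (hrange : ∀ t, 0 ≤ Fbar t ∧ Fbar t ≤ 1)
    (hanti : ∀ s t : ℝ, 0 ≤ s → s ≤ t → Fbar t ≤ Fbar s)
    (hNBU : ∀ t₁ t₂ : ℝ, 0 ≤ t₁ → 0 ≤ t₂ → Fbar (t₁ + t₂) ≤ Fbar t₁ * Fbar t₂)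
    (hint : IntegrableOn Fbar (Ioi 0))
    (d₁ d₂ : ℕ) (hd₁ : 1 ≤ d₁) (hd : d₁ ≤ d₂) :
    (d₁ : ℝ) * ∫ t in Ioi (0 : ℝ), Fbar t ^ d₁ ≤
      (d₂ : ℝ) * ∫ t in Ioi (0 : ℝ), Fbar t ^ d₂ :=
  nbu_d_times_expected_min_monotone_general Fbar hrange hNBU hint d₁ d₂ hd
end

section
/- For a nonnegative NWU random variable X with i.i.d. copies, the quantity d·E[min{X₁,...,X_d}] = d·∫₀^∞ F̄(t)^d dt is nonincreasing in the integer d ≥ 1. -/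
/-!
Let `T(u) = |{t > 0 : F̄ t > u}|` and `A(e) = ∫₀¹ u^e T(u) du`; by the layer-cake formula
`∫₀^∞ F̄^(e+1) = (e+1) A(e)`, so `d ∫ F̄^d = d² A(d-1)`. The sets `{F̄ > u}` are intervals starting
at `0`, and NWU gives `{F̄ > y} + {F̄ > z} ⊆ {F̄ > yz}`, hence `T(y) + T(z) ≤ T(yz)`. Substituting
`u = zy`, `∫₀^z u^e T(u) du = z^(e+1) ∫₀¹ y^e T(zy) dy ≥ z^(e+1) (A(e) + T(z)/(e+1))`.
Integrating against `(k+1) z^k` over `(0,1)`, where Fubini turns the left side into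
`A(e) - A(e+k+1)`, gives `(k+1) (A(e)/(e+k+2) + A(e+k+1)/(e+1)) + A(e+k+1) ≤ A(e)`, which
rearranges to `(e+k+2)² A(e+k+1) ≤ (e+1)² A(e)`.

Averaging is needed: NWU implies the pointwise bound `F̄(u/d₂)^d₂ ≤ F̄(u/d₁)^d₁` when `d₁ ∣ d₂`,
but not in general; it fails for `F̄ t = exp (-⌈t⌉)`, `d₁ = 2`, `d₂ = 3`, `u = 3`.
-/

open MeasureTheory Set
open scoped ENNReal Pointwise

theorem volume_le_biSup_ofReal {A : Set ℝ} (hA : A ⊆ Ioi 0) :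
    volume A ≤ ⨆ a ∈ A, ENNReal.ofReal a := by
  set M := ⨆ a ∈ A, ENNReal.ofReal a
  rcases eq_or_ne M ⊤ with hM | hM
  · exact hM ▸ le_top
  calc volume A ≤ volume (Ioc 0 M.toReal) := measure_mono fun a ha =>
        ⟨hA ha, (ENNReal.ofReal_le_iff_le_toReal hM).mp (le_biSup _ ha)⟩
    _ = M := by rw [Real.volume_Ioc, sub_zero, ENNReal.ofReal_toReal hM]

theorem volume_add_volume_le_of_add_subset {A B C : Set ℝ} (hA : A ⊆ Ioi 0) (hB : B ⊆ Ioi 0)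
    (hA₀ : A.Nonempty) (hB₀ : B.Nonempty) (hC : ∀ c ∈ C, Ioc 0 c ⊆ C) (hABC : A + B ⊆ C) :
    volume A + volume B ≤ volume C :=
  calc volume A + volume B ≤ (⨆ a ∈ A, ENNReal.ofReal a) + ⨆ b ∈ B, ENNReal.ofReal b :=
        add_le_add (volume_le_biSup_ofReal hA) (volume_le_biSup_ofReal hB)
    _ ≤ volume C := ENNReal.biSup_add_biSup_le hA₀ hB₀ fun a ha b hb => by
        rw [← ENNReal.ofReal_add (hA ha).le (hB hb).le, ← sub_zero (a + b), ← Real.volume_Ioc]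
        exact measure_mono (hC _ (hABC (add_mem_add ha hb)))

theorem lintegral_Ioo_ofReal_pow {a b : ℝ} (ha : 0 ≤ a) (hab : a ≤ b) (k : ℕ) :
    ∫⁻ z in Ioo a b, ENNReal.ofReal z ^ k =
      ENNReal.ofReal ((b ^ (k + 1) - a ^ (k + 1)) / (k + 1)) := by
  have hpow : EqOn (fun z => ENNReal.ofReal z ^ k) (fun z => ENNReal.ofReal (z ^ k)) (Ioo a b) :=
    fun z hz => (ENNReal.ofReal_pow (ha.trans hz.1.le) k).symm
  rw [setLIntegral_congr_fun measurableSet_Ioo hpow, ← ofReal_integral_eq_lintegral_ofReal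
    ((continuous_pow k).integrableOn_Icc.mono_set Ioo_subset_Icc_self) ?_,
    ← integral_Ioc_eq_integral_Ioo, ← intervalIntegral.integral_of_le hab, integral_pow]
  exact (ae_restrict_iff' measurableSet_Ioo).mpr
    (.of_forall fun z hz => pow_nonneg (ha.trans hz.1.le) k)

theorem lintegral_Ioo_zero_one_ofReal_pow (k : ℕ) :
    ∫⁻ z in Ioo 0 1, ENNReal.ofReal z ^ k = ((k : ℝ≥0∞) + 1)⁻¹ := by
  rw [lintegral_Ioo_ofReal_pow le_rfl zero_le_one, one_pow, zero_pow k.succ_ne_zero, sub_zero,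
    one_div, ENNReal.ofReal_inv_of_pos (by positivity)]
  norm_cast

theorem lintegral_Ioo_zero_eq_mul_lintegral_comp_mul {z : ℝ} (hz : 0 < z) (f : ℝ → ℝ≥0∞) :
    ∫⁻ u in Ioo 0 z, f u = ENNReal.ofReal z * ∫⁻ y in Ioo 0 1, f (z * y) := by
  have := lintegral_image_eq_lintegral_abs_deriv_mul (measurableSet_Ioo (a := (0 : ℝ)) (b := 1))
    (fun y _ => (hasDerivAt_const_mul z).hasDerivWithinAt)
    (mul_right_injective₀ hz.ne').injOn f
  rw [image_mul_left_Ioo hz, mul_zero, mul_one, abs_of_pos hz] at this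
  rw [this, lintegral_const_mul' _ _ ENNReal.ofReal_ne_top]

theorem lintegral_Ioo_mul_lintegral_Ioo_comm {a b : ℝ} {f g : ℝ → ℝ≥0∞} (hf : Measurable f)
    (hg : Measurable g) :
    ∫⁻ z in Ioo a b, g z * ∫⁻ u in Ioo a z, f u =
      ∫⁻ u in Ioo a b, f u * ∫⁻ z in Ioo u b, g z := by
  set H : ℝ → ℝ → ℝ≥0∞ := fun z u =>
    {p : ℝ × ℝ | p.2 < p.1}.indicator (fun p => g p.1 * f p.2) (z, u)
  have hH : Measurable (Function.uncurry H) :=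
    ((hg.comp measurable_fst).mul (hf.comp measurable_snd)).indicator
      (measurableSet_lt measurable_snd measurable_fst)
  have inner_left : ∀ z ∈ Ioo a b, g z * ∫⁻ u in Ioo a z, f u = ∫⁻ u in Ioo a b, H z u := by
    intro z hz
    have hHz : H z = (Iio z).indicator fun u => g z * f u := by
      ext u; by_cases hu : u < z <;> simp [H, hu]
    rw [hHz, lintegral_indicator measurableSet_Iio, Measure.restrict_restrict measurableSet_Iio,
      Iio_inter_Ioo, min_eq_left hz.2.le, lintegral_const_mul _ hf]
  have inner_right : ∀ u ∈ Ioo a b, f u * ∫⁻ z in Ioo u b, g z = ∫⁻ z in Ioo a b, H z u := by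
    intro u hu
    have hHu : (H · u) = (Ioi u).indicator fun z => f u * g z := by
      ext z; by_cases hz : u < z <;> simp [H, hz, mul_comm]
    rw [hHu, lintegral_indicator measurableSet_Ioi, Measure.restrict_restrict measurableSet_Ioi,
      Ioi_inter_Ioo, max_eq_left hu.1.le, lintegral_const_mul _ hg]
  rw [setLIntegral_congr_fun measurableSet_Ioo inner_left,
    setLIntegral_congr_fun measurableSet_Ioo inner_right]
  exact lintegral_lintegral_swap hH.aemeasurable

theorem sq_mul_le_sq_mul_of_add_le {a b : ℝ≥0∞} {m c : ℕ} (hm : m ≠ 0)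
    (h : c * (a / (m + c) + b / m) + b ≤ a) : ((m : ℝ≥0∞) + c) ^ 2 * b ≤ m ^ 2 * a := by
  rcases eq_or_ne a ⊤ with rfl | ha
  · simp [hm]
  have hm' : (m : ℝ≥0∞) ≠ 0 := by exact_mod_cast hm
  have hmc : (m : ℝ≥0∞) + c ≠ 0 := by simp [hm]
  have key := mul_le_mul_right h ((m : ℝ≥0∞) * (m + c))
  have lhs : (m : ℝ≥0∞) * (m + c) * (c * (a / (m + c) + b / m) + b) =
      c * m * a + (m + c) ^ 2 * b :=
    calc (m : ℝ≥0∞) * (m + c) * (c * (a / (m + c) + b / m) + b)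
        = c * (a / (m + c) * (m + c)) * m + c * (b / m * m) * (m + c) + m * (m + c) * b := by
          ring
      _ = c * m * a + (m + c) ^ 2 * b := by
          rw [ENNReal.div_mul_cancel hmc (by finiteness),
            ENNReal.div_mul_cancel hm' (by finiteness)]
          ring
  rw [lhs, show (m : ℝ≥0∞) * (m + c) * a = c * m * a + m ^ 2 * a by ring] at key
  exact (ENNReal.add_le_add_iff_left (by finiteness)).mp key

noncomputable def powMoment (T : ℝ → ℝ≥0∞) (e : ℕ) : ℝ≥0∞ :=
  ∫⁻ u in Ioo 0 1, ENNReal.ofReal u ^ e * T u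

namespace powMoment

variable {T : ℝ → ℝ≥0∞}

theorem lintegral_mul_lintegral_Ioo_add (hT : Measurable T) (e k : ℕ) :
    (∫⁻ z in Ioo 0 1, (k + 1) * ENNReal.ofReal z ^ k *
        ∫⁻ u in Ioo 0 z, ENNReal.ofReal u ^ e * T u) + powMoment T (e + k + 1) =
      powMoment T e := by
  rw [lintegral_Ioo_mul_lintegral_Ioo_comm (by fun_prop) (by fun_prop), powMoment, powMoment,
    ← lintegral_add_right _ (by fun_prop)]
  refine setLIntegral_congr_fun measurableSet_Ioo fun u hu => ?_
  have htail :
      (k + 1) * (∫⁻ z in Ioo u 1, ENNReal.ofReal z ^ k) + ENNReal.ofReal u ^ (k + 1) = 1 := by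
    rw [lintegral_Ioo_ofReal_pow hu.1.le hu.2.le, ← ENNReal.ofReal_pow hu.1.le,
      show ((k : ℝ≥0∞) + 1) = ENNReal.ofReal (k + 1) by norm_cast,
      ← ENNReal.ofReal_mul (by positivity), mul_div_cancel₀ _ (by positivity), one_pow,
      ← ENNReal.ofReal_add (sub_nonneg.mpr (pow_le_one₀ hu.1.le hu.2.le)) (pow_nonneg hu.1.le _),
      sub_add_cancel, ENNReal.ofReal_one]
  calc ENNReal.ofReal u ^ e * T u * (∫⁻ z in Ioo u 1, (k + 1) * ENNReal.ofReal z ^ k)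
        + ENNReal.ofReal u ^ (e + k + 1) * T u
      = ENNReal.ofReal u ^ e * T u *
          ((k + 1) * (∫⁻ z in Ioo u 1, ENNReal.ofReal z ^ k) + ENNReal.ofReal u ^ (k + 1)) := by
        rw [lintegral_const_mul _ (by fun_prop)]
        ring
    _ = ENNReal.ofReal u ^ e * T u := by rw [htail, mul_one]

theorem pow_mul_add_le_lintegral_Ioo (hT : Measurable T)
    (hsup : ∀ y ∈ Ioo (0 : ℝ) 1, ∀ z ∈ Ioo (0 : ℝ) 1, T y + T z ≤ T (y * z))
    (e : ℕ) {z : ℝ} (hz : z ∈ Ioo (0 : ℝ) 1) :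
    ENNReal.ofReal z ^ (e + 1) * (powMoment T e + T z / (e + 1)) ≤
      ∫⁻ u in Ioo 0 z, ENNReal.ofReal u ^ e * T u := by
  have hsplit : powMoment T e + T z / (e + 1) =
      ∫⁻ y in Ioo 0 1, ENNReal.ofReal y ^ e * (T y + T z) := by
    simp_rw [mul_add]
    rw [lintegral_add_left (by fun_prop), lintegral_mul_const _ (by fun_prop),
      lintegral_Ioo_zero_one_ofReal_pow, powMoment, div_eq_mul_inv, mul_comm (T z)]
  calc ENNReal.ofReal z ^ (e + 1) * (powMoment T e + T z / (e + 1))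
      ≤ ENNReal.ofReal z ^ (e + 1) * ∫⁻ y in Ioo 0 1, ENNReal.ofReal y ^ e * T (z * y) := by
        rw [hsplit]
        refine mul_le_mul_right (setLIntegral_mono' measurableSet_Ioo fun y hy => ?_) _
        exact mul_le_mul_right (mul_comm y z ▸ hsup y hy z hz) _
    _ = ∫⁻ u in Ioo 0 z, ENNReal.ofReal u ^ e * T u := by
        rw [lintegral_Ioo_zero_eq_mul_lintegral_comp_mul hz.1,
          ← lintegral_const_mul' _ _ (by finiteness), ← lintegral_const_mul' _ _ (by finiteness)]
        refine lintegral_congr fun y => ?_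
        rw [ENNReal.ofReal_mul hz.1.le]
        ring

theorem mul_add_le_lintegral_mul_lintegral_Ioo (hT : Measurable T)
    (hsup : ∀ y ∈ Ioo (0 : ℝ) 1, ∀ z ∈ Ioo (0 : ℝ) 1, T y + T z ≤ T (y * z)) (e k : ℕ) :
    (k + 1) * (powMoment T e / (e + k + 2) + powMoment T (e + k + 1) / (e + 1)) ≤
      ∫⁻ z in Ioo 0 1, (k + 1) * ENNReal.ofReal z ^ k *
        ∫⁻ u in Ioo 0 z, ENNReal.ofReal u ^ e * T u :=
  calc (k + 1) * (powMoment T e / (e + k + 2) + powMoment T (e + k + 1) / (e + 1))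
      = ∫⁻ z in Ioo 0 1, (k + 1) * ENNReal.ofReal z ^ k *
          (ENNReal.ofReal z ^ (e + 1) * (powMoment T e + T z / (e + 1))) := by
        have hexpand : ∀ z : ℝ, (k + 1) * ENNReal.ofReal z ^ k *
            (ENNReal.ofReal z ^ (e + 1) * (powMoment T e + T z / (e + 1))) =
            (k + 1) * powMoment T e * ENNReal.ofReal z ^ (e + k + 1) +
              (k + 1) / (e + 1) * (ENNReal.ofReal z ^ (e + k + 1) * T z) := fun z => by
          simp only [div_eq_mul_inv]; ring
        simp_rw [hexpand]
        rw [lintegral_add_left (by fun_prop), lintegral_const_mul _ (by fun_prop),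
          lintegral_const_mul _ (by fun_prop), lintegral_Ioo_zero_one_ofReal_pow, ← powMoment]
        push_cast
        rw [add_assoc _ (1 : ℝ≥0∞), one_add_one_eq_two]
        simp only [div_eq_mul_inv]
        ring
    _ ≤ _ := setLIntegral_mono' measurableSet_Ioo fun z hz =>
        mul_le_mul_right (pow_mul_add_le_lintegral_Ioo hT hsup e hz) _

theorem antitone_sq_mul (hT : Measurable T)
    (hsup : ∀ y ∈ Ioo (0 : ℝ) 1, ∀ z ∈ Ioo (0 : ℝ) 1, T y + T z ≤ T (y * z)) :
    Antitone fun e : ℕ => ((e : ℝ≥0∞) + 1) ^ 2 * powMoment T e := by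
  intro e e' hee'
  obtain rfl | hlt := hee'.eq_or_lt
  · exact le_rfl
  obtain ⟨k, rfl⟩ := Nat.exists_eq_add_of_lt hlt
  have key := (add_le_add (mul_add_le_lintegral_mul_lintegral_Ioo hT hsup e k) le_rfl).trans
    (lintegral_mul_lintegral_Ioo_add hT e k).le
  have hmc : (e : ℝ≥0∞) + 1 + (k + 1) = e + k + 1 + 1 := by ring
  have := sq_mul_le_sq_mul_of_add_le (m := e + 1) (c := k + 1) e.succ_ne_zero
    (by push_cast; rwa [hmc, add_assoc _ (1 : ℝ≥0∞), one_add_one_eq_two])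
  push_cast at this ⊢
  rwa [hmc] at this

end powMoment

noncomputable def superlevelVolume (F : ℝ → ℝ) (u : ℝ) : ℝ≥0∞ := volume ({t | u < F t} ∩ Ioi 0)

namespace superlevelVolume

variable {F : ℝ → ℝ}

theorem antitone (F : ℝ → ℝ) : Antitone (superlevelVolume F) := fun _ _ huv =>
  measure_mono (inter_subset_inter_left _ fun _ ht => huv.trans_lt ht)

theorem eq_zero_of_one_le (hF : ∀ t, F t ≤ 1) {u : ℝ} (hu : 1 ≤ u) :
    superlevelVolume F u = 0 := by
  have : {t | u < F t} = ∅ := eq_empty_of_forall_notMem fun t ht => ((hF t).trans hu).not_gt ht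
  simp [superlevelVolume, this]

theorem add_le_mul (hanti : AntitoneOn F (Ici 0))
    (hNWU : ∀ s t : ℝ, 0 ≤ s → 0 ≤ t → F s * F t ≤ F (s + t))
    {y z : ℝ} (hy : y ∈ Icc (0 : ℝ) 1) (hz : z ∈ Icc (0 : ℝ) 1) :
    superlevelVolume F y + superlevelVolume F z ≤ superlevelVolume F (y * z) := by
  rcases ({t | y < F t} ∩ Ioi 0).eq_empty_or_nonempty with hy₀ | hy₀
  · rw [show superlevelVolume F y = 0 by simp [superlevelVolume, hy₀], zero_add]
    exact antitone F (mul_le_of_le_one_left hz.1 hy.2)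
  rcases ({t | z < F t} ∩ Ioi 0).eq_empty_or_nonempty with hz₀ | hz₀
  · rw [show superlevelVolume F z = 0 by simp [superlevelVolume, hz₀], add_zero]
    exact antitone F (mul_le_of_le_one_right hy.1 hz.2)
  refine volume_add_volume_le_of_add_subset inter_subset_right inter_subset_right hy₀ hz₀
    (fun c hc t ht => ⟨hc.1.trans_le
      (hanti (mem_Ici.mpr ht.1.le) (mem_Ici.mpr (mem_Ioi.mp hc.2).le) ht.2), ht.1⟩) ?_
  rintro _ ⟨s, ⟨hs, hs₀⟩, t, ⟨ht, ht₀⟩, rfl⟩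
  exact ⟨(mul_lt_mul'' hs ht hy.1 hz.1).trans_le (hNWU s t (le_of_lt hs₀) (le_of_lt ht₀)),
    mem_Ioi.mpr (add_pos hs₀ ht₀)⟩

end superlevelVolume

theorem lintegral_ofReal_pow_eq_mul_powMoment {F : ℝ → ℝ} (hF₀ : ∀ t, 0 ≤ F t)
    (hF₁ : ∀ t, F t ≤ 1) (hF : AEMeasurable F (volume.restrict (Ioi 0))) (e : ℕ) :
    ∫⁻ t in Ioi 0, ENNReal.ofReal (F t ^ (e + 1)) =
      (e + 1) * powMoment (superlevelVolume F) e := by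
  have hprim : ∀ x : ℝ, ∫ t in (0 : ℝ)..x, ((e : ℝ) + 1) * t ^ e = x ^ (e + 1) := fun x => by
    rw [intervalIntegral.integral_const_mul, integral_pow, zero_pow e.succ_ne_zero, sub_zero]
    field_simp
  have hlayer := lintegral_comp_eq_lintegral_meas_lt_mul (volume.restrict (Ioi 0))
    (.of_forall hF₀) hF (g := fun t => ((e : ℝ) + 1) * t ^ e)
    (fun _ _ => (by fun_prop : Continuous _).intervalIntegrable _ _)
    ((ae_restrict_iff' measurableSet_Ioi).mpr (.of_forall fun t ht =>
      mul_nonneg (by positivity) (pow_nonneg (le_of_lt ht) e)))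
  have hintegrand : EqOn
      (fun u => volume.restrict (Ioi 0) {t | u < F t} * ENNReal.ofReal (((e : ℝ) + 1) * u ^ e))
      (fun u => (e + 1) * (ENNReal.ofReal u ^ e * superlevelVolume F u)) (Ioi 0) := fun u hu => by
    dsimp only
    rw [Measure.restrict_apply' measurableSet_Ioi, ENNReal.ofReal_mul (by positivity),
      ENNReal.ofReal_pow (le_of_lt hu), ← superlevelVolume]
    norm_cast
    ring
  have hT := (superlevelVolume.antitone F).measurable
  simp only [hprim] at hlayer
  rw [hlayer, setLIntegral_congr_fun measurableSet_Ioi hintegrand,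
    ← Ioo_union_Ici_eq_Ioi zero_lt_one,
    lintegral_union measurableSet_Ici ((Iio_disjoint_Ici le_rfl).mono_left Ioo_subset_Iio_self),
    setLIntegral_eq_zero measurableSet_Ici, add_zero, lintegral_const_mul _ (by fun_prop),
    powMoment]
  intro u hu
  simp [superlevelVolume.eq_zero_of_one_le hF₁ hu]

theorem natCast_mul_lintegral_ofReal_pow_le {F : ℝ → ℝ} (hF₀ : ∀ t, 0 ≤ F t)
    (hF₁ : ∀ t, F t ≤ 1) (hanti : AntitoneOn F (Ici 0))
    (hNWU : ∀ s t : ℝ, 0 ≤ s → 0 ≤ t → F s * F t ≤ F (s + t)) {m n : ℕ} (hm : 1 ≤ m)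
    (hmn : m ≤ n) :
    (n : ℝ≥0∞) * ∫⁻ t in Ioi 0, ENNReal.ofReal (F t ^ n) ≤
      m * ∫⁻ t in Ioi 0, ENNReal.ofReal (F t ^ m) := by
  obtain ⟨e, rfl⟩ := Nat.exists_eq_add_of_le' hm
  obtain ⟨e', rfl⟩ := Nat.exists_eq_add_of_le' (hm.trans hmn)
  have hF := aemeasurable_restrict_of_antitoneOn (μ := volume) measurableSet_Ioi
    (hanti.mono Ioi_subset_Ici_self)
  have hsup : ∀ y ∈ Ioo (0 : ℝ) 1, ∀ z ∈ Ioo (0 : ℝ) 1,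
      superlevelVolume F y + superlevelVolume F z ≤ superlevelVolume F (y * z) :=
    fun y hy z hz => superlevelVolume.add_le_mul hanti hNWU (Ioo_subset_Icc_self hy)
      (Ioo_subset_Icc_self hz)
  rw [lintegral_ofReal_pow_eq_mul_powMoment hF₀ hF₁ hF,
    lintegral_ofReal_pow_eq_mul_powMoment hF₀ hF₁ hF, ← mul_assoc, ← mul_assoc]
  push_cast
  simpa only [sq] using
    powMoment.antitone_sq_mul (superlevelVolume.antitone F).measurable hsup (by omega : e ≤ e')

/-- For a survival function `F̄` of a nonnegative NWU random variable with finite mean,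
`d · ∫₀^∞ F̄(t)^d dt` (which equals `d · E[min of d i.i.d. copies]`) is nonincreasing
in the integer `d ≥ 1`. -/
theorem nwu_d_times_expected_min_antitone (Fbar : ℝ → ℝ)
    (hrange : ∀ t, 0 ≤ Fbar t ∧ Fbar t ≤ 1)
    (hanti : ∀ s t : ℝ, 0 ≤ s → s ≤ t → Fbar t ≤ Fbar s)
    (hNWU : ∀ t₁ t₂ : ℝ, 0 ≤ t₁ → 0 ≤ t₂ → Fbar t₁ * Fbar t₂ ≤ Fbar (t₁ + t₂))
    (hint : IntegrableOn Fbar (Ioi 0))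
    (d₁ d₂ : ℕ) (hd₁ : 1 ≤ d₁) (hd : d₁ ≤ d₂) :
    (d₂ : ℝ) * ∫ t in Ioi (0 : ℝ), Fbar t ^ d₂ ≤
      (d₁ : ℝ) * ∫ t in Ioi (0 : ℝ), Fbar t ^ d₁ := by
  have hF₀ : ∀ t, 0 ≤ Fbar t := fun t => (hrange t).1
  have hantiOn : AntitoneOn Fbar (Ici 0) := fun s hs t _ hst => hanti s t hs hst
  have hF := aemeasurable_restrict_of_antitoneOn (μ := volume) measurableSet_Ioi
    (hantiOn.mono Ioi_subset_Ici_self)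
  have hintegral : ∀ d : ℕ, ∫ t in Ioi 0, Fbar t ^ d =
      (∫⁻ t in Ioi 0, ENNReal.ofReal (Fbar t ^ d)).toReal := fun d =>
    integral_eq_lintegral_of_nonneg_ae (.of_forall fun t => pow_nonneg (hF₀ t) d)
      (hF.pow_const d).aestronglyMeasurable
  have hfin : ∫⁻ t in Ioi 0, ENNReal.ofReal (Fbar t ^ d₁) ≠ ⊤ :=
    ((lintegral_mono fun t => ENNReal.ofReal_le_ofReal
      (pow_le_of_le_one (hF₀ t) (hrange t).2 (by omega))).trans_lt hint.lintegral_lt_top).ne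
  have key := ENNReal.toReal_mono (ENNReal.mul_ne_top (ENNReal.natCast_ne_top d₁) hfin)
    (natCast_mul_lintegral_ofReal_pow_le hF₀ (fun t => (hrange t).2) hantiOn hNWU hd₁ hd)
  simpa only [hintegral, ENNReal.toReal_mul, ENNReal.toReal_natCast] using key
end
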